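/- Let K be the cyclic nilpotent Leibniz algebra of dimension n with basis a_1, ..., a_n as above, and let g be a right derivation of K. Then g(a_2) = g(a_3) = ... = g(a_n) = 0. -/

import Mathlib

/-!
Write `a₁, …, aₙ` for the basis. Every right derivation `g` kills squares, since
`g [x, x] = [x, g x] - [x, g x]`; so `g a₂ = g [a₁, a₁] = 0`. For `j ≥ 2`, `aⱼ` annihilates from
the left, so `g aⱼ = 0` gives `g aⱼ₊₁ = g [a₁, aⱼ] = [a₁, g aⱼ] - [aⱼ, g a₁] = 0`, and induction
along the chain `aⱼ₊₁ = [a₁, aⱼ]` finishes.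
-/

namespace LinearMap

variable {R L : Type*} [CommRing R] [AddCommGroup L] [Module R L]

def IsRightDerivation (br : L →ₗ[R] L →ₗ[R] L) (g : L →ₗ[R] L) : Prop :=
  ∀ x y : L, g (br x y) = br x (g y) - br y (g x)

namespace IsRightDerivation

variable {br : L →ₗ[R] L →ₗ[R] L} {g : L →ₗ[R] L}

theorem map_bracket_self (hg : IsRightDerivation br g) (x : L) : g (br x x) = 0 := by
  rw [hg, sub_self]

theorem map_bracket_eq_zero (hg : IsRightDerivation br g) (x : L) {y : L} (hy : br y = 0)
    (hgy : g y = 0) : g (br x y) = 0 := by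
  rw [hg, hy, hgy, map_zero, zero_apply, sub_zero]

end IsRightDerivation

end LinearMap

open LinearMap

/-- Let `K` be the cyclic nilpotent Leibniz algebra with basis `a ⟨0, by omega⟩, …, a (n-1)`
(representing `a_1, …, a_n`) as above. Any right derivation `g` of `K` vanishes on
`a_2, …, a_n`. -/
theorem right_derivation_of_cyclic_nilpotent
    {F : Type*} [Field F] {L : Type*} [AddCommGroup L] [Module F L]
    {n : ℕ} (hn : 2 ≤ n)
    (a : Module.Basis (Fin n) F L)
    (br : L →ₗ[F] L →ₗ[F] L)
    (hsucc : ∀ j : Fin n, ∀ h : j.val + 1 < n, br (a ⟨0, by omega⟩) (a j) = a ⟨j.val + 1, h⟩)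
    (habel : ∀ i j : Fin n, i.val ≠ 0 → br (a i) (a j) = 0)
    (g : L →ₗ[F] L)
    (hg : ∀ x y : L, g (br x y) = br x (g y) - br y (g x)) :
    ∀ k : Fin n, 1 ≤ k.val → g (a k) = 0 := by
  have hg : IsRightDerivation br g := hg
  have hannih (i : Fin n) (hi : i.val ≠ 0) : br (a i) = 0 :=
    a.ext fun j ↦ habel i j hi
  suffices h : ∀ m (hm : m + 1 < n), g (a ⟨m + 1, hm⟩) = 0 by
    rintro ⟨k, hk⟩ hk1
    obtain ⟨m, rfl⟩ := Nat.exists_eq_add_of_le' hk1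
    exact h m hk
  intro m
  induction m with
  | zero =>
    intro hm
    rw [← hsucc ⟨0, by omega⟩ hm]
    exact hg.map_bracket_self _
  | succ m ih =>
    intro hm
    rw [← hsucc ⟨m + 1, by omega⟩ hm]
    exact hg.map_bracket_eq_zero _ (hannih _ m.succ_ne_zero) (ih (by omega))
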